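/- Matrix CUR error bound (Corollary to Theorem 1): Let A ∈ ℂ^{m×n}, let C ∈ ℂ^{m×r} consist of r columns of A and R ∈ ℂ^{r×n} consist of r rows of A, chosen so that the interpolatory decompositions satisfy ‖A − CF_c*‖_F² ≤ q₁ ∑_{k>r} σ_k(A)² and ‖A* − R*F_r*‖_F² ≤ q₂ ∑_{k>r} σ_k(A)² with q₁ = 1 + f²r(n−r) and q₂ = 1 + f²r(m−r). Set U = C† A R†. Then ‖A − CUR‖_F² ≤ (2 + f²r(m+n−2r)) ∑_{k>r} σ_k(A)². -/

import Mathlib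

open Matrix BigOperators

/-- Frobenius norm of a complex matrix. -/
noncomputable def frob {m n : Type*} [Fintype m] [Fintype n] (A : Matrix m n ℂ) : ℝ :=
  Real.sqrt (∑ i, ∑ j, ‖A i j‖ ^ 2)

/-- The column-selection matrix `I(:,p)` built from an index map `p`. -/
def colSel {n r : ℕ} (p : Fin r → Fin n) : Matrix (Fin n) (Fin r) ℂ :=
  Matrix.of fun i j => if i = p j then 1 else 0

/-- `B` is the Moore–Penrose pseudoinverse of `A` (four Penrose conditions). -/
def IsPinv {m n : Type*} [Fintype m] [Fintype n]
    (A : Matrix m n ℂ) (B : Matrix n m ℂ) : Prop :=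
  A * B * A = A ∧ B * A * B = B ∧ (A * B)ᴴ = A * B ∧ (B * A)ᴴ = B * A

/-!
Write `P = CC†` and `Q = R†R`; both are orthogonal projectors and `CUR = PAQ`. Then
`A - PAQ = (A - PA) + P(A - AQ)`, an orthogonal sum, so
`‖A - CUR‖² ≤ ‖A - PA‖² + ‖A - AQ‖²`. Since `PA` is the best Frobenius approximation of `A`
by matrices with columns in the range of `C`, `‖A - PA‖ ≤ ‖A - CF_c*‖`, and likewise
`‖A - AQ‖ = ‖A* - QA*‖ ≤ ‖A* - R*F_r*‖`. Adding the two interpolative bounds gives the claim.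
-/

section Frobenius

variable {m n : Type*} [Fintype m] [Fintype n]

lemma frob_nonneg (A : Matrix m n ℂ) : 0 ≤ frob A := Real.sqrt_nonneg _

lemma frob_sq_eq_re_trace (A : Matrix m n ℂ) : frob A ^ 2 = (Aᴴ * A).trace.re := by
  rw [frob, Real.sq_sqrt (by positivity), trace, Complex.re_sum, Finset.sum_comm]
  refine Finset.sum_congr rfl fun j _ => ?_
  simp only [diag_apply, mul_apply, conjTranspose_apply, Complex.re_sum, RCLike.star_def,
    Complex.mul_re, Complex.conj_re, Complex.conj_im, Complex.sq_norm, Complex.normSq_apply]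
  ring_nf

lemma frob_conjTranspose (A : Matrix m n ℂ) : frob Aᴴ = frob A := by
  rw [frob, frob, Finset.sum_comm]
  simp only [conjTranspose_apply, norm_star]

lemma frob_add_sq_of_conjTranspose_mul_eq_zero {X Z : Matrix m n ℂ} (h : Xᴴ * Z = 0) :
    frob (X + Z) ^ 2 = frob X ^ 2 + frob Z ^ 2 := by
  have h' : Zᴴ * X = 0 := by simpa using congrArg conjTranspose h
  simp only [frob_sq_eq_re_trace, conjTranspose_add, Matrix.add_mul, Matrix.mul_add, h, h',
    add_zero, zero_add, trace_add, Complex.add_re]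

end Frobenius

namespace IsStarProjection

variable {m n : Type*} [Fintype m] {P : Matrix m m ℂ}

lemma conjTranspose_mul_mul_sub_eq_zero (hP : IsStarProjection P) (Y W : Matrix m n ℂ) :
    (P * Y)ᴴ * (W - P * W) = 0 := by
  have hPP : P * P = P := hP.isIdempotentElem
  have hPH : Pᴴ = P := hP.isSelfAdjoint
  rw [conjTranspose_mul, hPH, Matrix.mul_assoc, Matrix.mul_sub, ← Matrix.mul_assoc P P, hPP,
    sub_self, Matrix.mul_zero]

variable [Fintype n]

lemma frob_sq_eq_add (hP : IsStarProjection P) (Y : Matrix m n ℂ) :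
    frob Y ^ 2 = frob (P * Y) ^ 2 + frob (Y - P * Y) ^ 2 := by
  rw [← frob_add_sq_of_conjTranspose_mul_eq_zero (hP.conjTranspose_mul_mul_sub_eq_zero Y Y),
    add_sub_cancel]

lemma frob_mul_le (hP : IsStarProjection P) (Y : Matrix m n ℂ) : frob (P * Y) ≤ frob Y := by
  refine le_of_sq_le_sq ?_ (frob_nonneg Y)
  nlinarith [hP.frob_sq_eq_add Y, sq_nonneg (frob (Y - P * Y))]

lemma frob_sub_mul_le (hP : IsStarProjection P) (Y : Matrix m n ℂ) :
    frob (Y - P * Y) ≤ frob Y := by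
  refine le_of_sq_le_sq ?_ (frob_nonneg Y)
  nlinarith [hP.frob_sq_eq_add Y, sq_nonneg (frob (P * Y))]

lemma frob_sub_mul_le_of_mul_eq (hP : IsStarProjection P) (Y : Matrix m n ℂ)
    {Z : Matrix m n ℂ} (hZ : P * Z = Z) : frob (Y - P * Y) ≤ frob (Y - Z) := by
  have hsplit : Y - P * Y = (Y - Z) - P * (Y - Z) := by rw [Matrix.mul_sub, hZ]; abel
  exact hsplit ▸ hP.frob_sub_mul_le (Y - Z)

end IsStarProjection

namespace IsPinv

variable {m n : Type*} [Fintype m] [Fintype n] {C : Matrix m n ℂ} {Cd : Matrix n m ℂ}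

lemma conjTranspose (h : IsPinv C Cd) : IsPinv Cᴴ Cdᴴ := by
  obtain ⟨h₁, h₂, h₃, h₄⟩ := h
  refine ⟨?_, ?_, ?_, ?_⟩
  · rw [← conjTranspose_mul, ← conjTranspose_mul, ← Matrix.mul_assoc, h₁]
  · rw [← conjTranspose_mul, ← conjTranspose_mul, ← Matrix.mul_assoc, h₂]
  · rw [← conjTranspose_mul, conjTranspose_conjTranspose, h₄]
  · rw [← conjTranspose_mul, conjTranspose_conjTranspose, h₃]

lemma isStarProjection_mul_pinv (h : IsPinv C Cd) : IsStarProjection (C * Cd) :=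
  ⟨by rw [IsIdempotentElem, ← Matrix.mul_assoc, h.1], h.2.2.1⟩

lemma frob_sub_mul_pinv_mul_le {k : Type*} [Fintype k] (h : IsPinv C Cd) (A : Matrix m k ℂ)
    (F : Matrix n k ℂ) : frob (A - C * Cd * A) ≤ frob (A - C * F) :=
  h.isStarProjection_mul_pinv.frob_sub_mul_le_of_mul_eq A (by rw [← Matrix.mul_assoc, h.1])

end IsPinv

lemma frob_sub_mul_mul_sq_le {m n : Type*} [Fintype m] [Fintype n] {P : Matrix m m ℂ}
    (hP : IsStarProjection P) (A : Matrix m n ℂ) (Q : Matrix n n ℂ) :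
    frob (A - P * A * Q) ^ 2 ≤ frob (A - P * A) ^ 2 + frob (A - A * Q) ^ 2 := by
  have hsplit : A - P * A * Q = (A - P * A) + P * (A - A * Q) := by
    rw [Matrix.mul_sub, Matrix.mul_assoc]; abel
  have horth : (A - P * A)ᴴ * (P * (A - A * Q)) = 0 := by
    simpa only [conjTranspose_mul, conjTranspose_conjTranspose, conjTranspose_zero] using
      congrArg conjTranspose (hP.conjTranspose_mul_mul_sub_eq_zero (A - A * Q) A)
  rw [hsplit, frob_add_sq_of_conjTranspose_mul_eq_zero horth]
  gcongr
  exacts [frob_nonneg _, hP.frob_mul_le _]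

theorem cur_error_bound_general {m n r : ℕ}
    (f s : ℝ)
    (A : Matrix (Fin m) (Fin n) ℂ)
    (C : Matrix (Fin m) (Fin r) ℂ)
    (R : Matrix (Fin r) (Fin n) ℂ)
    (Fc : Matrix (Fin n) (Fin r) ℂ)
    (hFc : frob (A - C * Fcᴴ) ^ 2 ≤ (1 + f ^ 2 * r * ((n : ℝ) - r)) * s)
    (Fr : Matrix (Fin m) (Fin r) ℂ)
    (hFr : frob (Aᴴ - Rᴴ * Frᴴ) ^ 2 ≤ (1 + f ^ 2 * r * ((m : ℝ) - r)) * s)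
    (Cd : Matrix (Fin r) (Fin m) ℂ) (hCd : IsPinv C Cd)
    (Rd : Matrix (Fin n) (Fin r) ℂ) (hRd : IsPinv R Rd) :
    frob (A - C * (Cd * A * Rd) * R) ^ 2
      ≤ (2 + f ^ 2 * r * ((m : ℝ) + n - 2 * r)) * s := by
  have hcur : C * (Cd * A * Rd) * R = C * Cd * A * (Rd * R) := by
    simp only [Matrix.mul_assoc]
  have hcol : frob (A - C * Cd * A) ≤ frob (A - C * Fcᴴ) :=
    IsPinv.frob_sub_mul_pinv_mul_le hCd A Fcᴴ
  have hrow : frob (A - A * (Rd * R)) ≤ frob (Aᴴ - Rᴴ * Frᴴ) := by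
    have h := IsPinv.frob_sub_mul_pinv_mul_le (IsPinv.conjTranspose hRd) Aᴴ Frᴴ
    rwa [← conjTranspose_mul, ← conjTranspose_mul, ← conjTranspose_sub, frob_conjTranspose] at h
  calc frob (A - C * (Cd * A * Rd) * R) ^ 2
      ≤ frob (A - C * Cd * A) ^ 2 + frob (A - A * (Rd * R)) ^ 2 :=
        hcur ▸ frob_sub_mul_mul_sq_le (IsPinv.isStarProjection_mul_pinv hCd) A (Rd * R)
    _ ≤ frob (A - C * Fcᴴ) ^ 2 + frob (Aᴴ - Rᴴ * Frᴴ) ^ 2 := by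
        gcongr <;> exact frob_nonneg _
    _ ≤ (1 + f ^ 2 * r * ((n : ℝ) - r)) * s + (1 + f ^ 2 * r * ((m : ℝ) - r)) * s :=
        add_le_add hFc hFr
    _ = (2 + f ^ 2 * r * ((m : ℝ) + n - 2 * r)) * s := by ring

/-- Matrix CUR error bound: if `C` (columns of `A`) and `R` (rows of `A`) come with
interpolatory decompositions satisfying `‖A − CF_c*‖_F² ≤ (1 + f²r(n−r)) s` and
`‖A* − R*F_r*‖_F² ≤ (1 + f²r(m−r)) s`, where `s = ∑_{k>r} σ_k(A)²` is the tail of the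
squared singular values of `A` and `f ≥ 1`, then with `U = C†AR†`,
`‖A − CUR‖_F² ≤ (2 + f²r(m+n−2r)) s`. -/
theorem cur_error_bound {m n r : ℕ} (hrm : r ≤ m) (hrn : r ≤ n)
    (f s : ℝ) (hf : 1 ≤ f) (hs : 0 ≤ s)
    (A : Matrix (Fin m) (Fin n) ℂ)
    (pc : Fin r → Fin n) (hpc : Function.Injective pc)
    (pr : Fin r → Fin m) (hpr : Function.Injective pr)
    (C : Matrix (Fin m) (Fin r) ℂ) (hC : C = A * colSel pc)
    (R : Matrix (Fin r) (Fin n) ℂ) (hR : R = (colSel pr)ᴴ * A)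
    (Fc : Matrix (Fin n) (Fin r) ℂ)
    (hFc : frob (A - C * Fcᴴ) ^ 2 ≤ (1 + f ^ 2 * r * ((n : ℝ) - r)) * s)
    (Fr : Matrix (Fin m) (Fin r) ℂ)
    (hFr : frob (Aᴴ - Rᴴ * Frᴴ) ^ 2 ≤ (1 + f ^ 2 * r * ((m : ℝ) - r)) * s)
    (Cd : Matrix (Fin r) (Fin m) ℂ) (hCd : IsPinv C Cd)
    (Rd : Matrix (Fin n) (Fin r) ℂ) (hRd : IsPinv R Rd) :
    frob (A - C * (Cd * A * Rd) * R) ^ 2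
      ≤ (2 + f ^ 2 * r * ((m : ℝ) + n - 2 * r)) * s :=
  cur_error_bound_general f s A C R Fc hFc Fr hFr Cd hCd Rd hRd
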